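/- arXiv:2203.09555 — 5 statements merged into one kernel-verified Lean document; each statement's English description precedes it below -/
import Mathlib

section
/- For every MPNN T of type d → r there is an equivalent tuple (e_1, …, e_r) of MPLang expressions appropriate for input arity d, i.e., (e_1(G)(χ)(v), …, e_r(G)(χ)(v)) = T(G)(χ)(v) for every graph G, every d-dimensional feature map χ on G, and every node v; moreover, the function applications occurring in the expressions apply only activation functions used in layers of T. -/
/-!
A neuron of a layer computes `σ` of a linear combination of the input features at `v`, of
their sums over the neighbours of `v`, and of `1`; given MPLang expressions for the input
features this is again an MPLang expression, with `◇` producing the neighbourhood sums and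
only `σ` applied. Substituting layer by layer, starting from the projections `P_1, …, P_d`,
yields expressions for the whole network.
-/

open scoped BigOperators

/-- A finite graph: nodes `Fin n`, with a symmetric, irreflexive adjacency relation. -/
structure MPGraph where
  n : ℕ
  adj : Fin n → Fin n → Bool
  symm : ∀ u v, adj u v = adj v u
  irrefl : ∀ v, adj v v = false

namespace MPGraph

/-- The set of neighbors of `v` in `G`. -/
def neighbors (G : MPGraph) (v : Fin G.n) : Finset (Fin G.n) :=
  Finset.univ.filter fun u => G.adj v u

/-- The degree of a node. -/
def degree (G : MPGraph) (v : Fin G.n) : ℕ := (G.neighbors v).card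

/-- `G` has degree at most `p` (i.e., `G ∈ 𝔾_p`). -/
def DegreeLE (G : MPGraph) (p : ℕ) : Prop := ∀ v, G.degree v ≤ p

end MPGraph

/-- The rectified linear unit. -/
noncomputable def ReLU (x : ℝ) : ℝ := max 0 x

/-- An MPNN layer of type `d → r`: matrices `W₁, W₂ ∈ ℝ^{r×d}`, bias `b ∈ ℝ^r`,
and a continuous activation function `σ`. -/
structure Layer (d r : ℕ) where
  W₁ : Matrix (Fin r) (Fin d) ℝ
  W₂ : Matrix (Fin r) (Fin d) ℝ
  b : Fin r → ℝ
  σ : ℝ → ℝ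
  hσ : Continuous σ

namespace Layer

/-- The GFMT defined by a layer:
`L(G)(χ)(v) = σ(W₁ χ(v) + W₂ Σ_{u ∈ N_G(v)} χ(u) + b)`, componentwise. -/
noncomputable def eval {d r : ℕ} (L : Layer d r) (G : MPGraph)
    (χ : Fin G.n → Fin d → ℝ) (v : Fin G.n) : Fin r → ℝ :=
  fun i => L.σ (L.W₁.mulVec (χ v) i + L.W₂.mulVec (∑ u ∈ G.neighbors v, χ u) i + L.b i)

end Layer

/-- An MPNN: a nonempty sequence of layers with matching arities. -/
inductive MPNN : ℕ → ℕ → Type where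
  | single {d r : ℕ} : Layer d r → MPNN d r
  | cons {d m r : ℕ} : Layer d m → MPNN m r → MPNN d r

namespace MPNN

/-- The GFMT defined by an MPNN: the sequential composition of its layers. -/
noncomputable def eval : {d r : ℕ} → MPNN d r → (G : MPGraph) →
    (Fin G.n → Fin d → ℝ) → (Fin G.n → Fin r → ℝ)
  | _, _, .single L, G, χ => L.eval G χ
  | _, _, .cons L N, G, χ => N.eval G (L.eval G χ)

/-- A ReLU-MPNN: every layer uses ReLU, except that the last layer may use the identity. -/
def IsReLU : {d r : ℕ} → MPNN d r → Prop
  | _, _, .single L => L.σ = ReLU ∨ L.σ = id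
  | _, _, .cons L N => L.σ = ReLU ∧ N.IsReLU

/-- The set of activation functions used in the layers of an MPNN. -/
def activations : {d r : ℕ} → MPNN d r → Set (ℝ → ℝ)
  | _, _, .single L => {L.σ}
  | _, _, .cons L N => insert L.σ N.activations

/-- The number of layers of an MPNN. -/
def numLayers : {d r : ℕ} → MPNN d r → ℕ
  | _, _, .single _ => 1
  | _, _, .cons _ N => N.numLayers + 1

end MPNN

/-- MPLang expressions: `e ::= 1 | P_i | a·e | e + e | f(e) | ◇e`
with `f : ℝ → ℝ` continuous. -/
inductive MPLang : Type where
  | one : MPLang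
  | proj : ℕ → MPLang
  | scale : ℝ → MPLang → MPLang
  | add : MPLang → MPLang → MPLang
  | app : (f : ℝ → ℝ) → Continuous f → MPLang → MPLang
  | diamond : MPLang → MPLang

namespace MPLang

/-- `e` is appropriate for input arity `d`: every `P_i` has `1 ≤ i ≤ d`. -/
def Appropriate (d : ℕ) : MPLang → Prop
  | .one => True
  | .proj i => 1 ≤ i ∧ i ≤ d
  | .scale _ e => e.Appropriate d
  | .add e₁ e₂ => e₁.Appropriate d ∧ e₂.Appropriate d
  | .app _ _ e => e.Appropriate d
  | .diamond e => e.Appropriate d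

/-- Semantics of MPLang expressions (the `P_i` are 1-based; out-of-range
projections, which cannot occur in expressions appropriate for `d`, yield 0). -/
noncomputable def eval (d : ℕ) : MPLang → (G : MPGraph) →
    (Fin G.n → Fin d → ℝ) → Fin G.n → ℝ
  | .one, _, _, _ => 1
  | .proj i, _, χ, v => if h : i - 1 < d then χ v ⟨i - 1, h⟩ else 0
  | .scale a e, G, χ, v => a * e.eval d G χ v
  | .add e₁ e₂, G, χ, v => e₁.eval d G χ v + e₂.eval d G χ v
  | .app f _ e, G, χ, v => f (e.eval d G χ v)
  | .diamond e, G, χ, v => ∑ u ∈ G.neighbors v, e.eval d G χ u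

/-- All function applications in the expression apply functions from `F`. -/
def AppsIn (F : Set (ℝ → ℝ)) : MPLang → Prop
  | .one => True
  | .proj _ => True
  | .scale _ e => e.AppsIn F
  | .add e₁ e₂ => e₁.AppsIn F ∧ e₂.AppsIn F
  | .app f _ e => f ∈ F ∧ e.AppsIn F
  | .diamond e => e.AppsIn F

/-- A ReLU-MPLang expression: all function applications apply ReLU. -/
def IsReLU (e : MPLang) : Prop := e.AppsIn {ReLU}

end MPLang

namespace MPLang

noncomputable def evalTuple (d : ℕ) {k : ℕ} (es : Fin k → MPLang) (G : MPGraph)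
    (χ : Fin G.n → Fin d → ℝ) : Fin G.n → Fin k → ℝ :=
  fun v j => (es j).eval d G χ v

def listSum : List MPLang → MPLang
  | [] => .scale 0 .one
  | e :: l => .add e (listSum l)

lemma eval_listSum (d : ℕ) (l : List MPLang) (G : MPGraph) (χ : Fin G.n → Fin d → ℝ)
    (v : Fin G.n) : (listSum l).eval d G χ v = (l.map fun e => e.eval d G χ v).sum := by
  induction l with
  | nil => simp [listSum, eval]
  | cons e l ih => simp [listSum, eval, ih]

lemma appropriate_listSum {d : ℕ} {l : List MPLang} (h : ∀ e ∈ l, e.Appropriate d) :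
    (listSum l).Appropriate d := by
  induction l with
  | nil => trivial
  | cons e l ih => exact ⟨h e (by simp), ih fun e' he' => h e' (by simp [he'])⟩

lemma appsIn_listSum {F : Set (ℝ → ℝ)} {l : List MPLang} (h : ∀ e ∈ l, e.AppsIn F) :
    (listSum l).AppsIn F := by
  induction l with
  | nil => trivial
  | cons e l ih => exact ⟨h e (by simp), ih fun e' he' => h e' (by simp [he'])⟩

/-- Shifted by one because the projections `P_i` are 1-based. -/
def projs (d : ℕ) : Fin d → MPLang := fun j => .proj (j.val + 1)

lemma appropriate_projs (d : ℕ) (j : Fin d) : (projs d j).Appropriate d :=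
  ⟨Nat.le_add_left 1 j.val, j.isLt⟩

lemma evalTuple_projs (d : ℕ) (G : MPGraph) (χ : Fin G.n → Fin d → ℝ) :
    evalTuple d (projs d) G χ = χ := by
  funext v j
  simp [evalTuple, projs, eval, j.isLt]

end MPLang

namespace Layer

open MPLang

variable {d r : ℕ} (L : Layer d r)

def toMPLang (xs : Fin d → MPLang) (i : Fin r) : MPLang :=
  .app L.σ L.hσ <| .add
    (listSum <| (List.finRange d).map fun j =>
      .add (.scale (L.W₁ i j) (xs j)) (.scale (L.W₂ i j) (.diamond (xs j))))
    (.scale (L.b i) .one)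

lemma appropriate_toMPLang {d₀ : ℕ} {xs : Fin d → MPLang} (h : ∀ j, (xs j).Appropriate d₀)
    (i : Fin r) : (L.toMPLang xs i).Appropriate d₀ := by
  refine ⟨appropriate_listSum ?_, trivial⟩
  simp only [List.mem_map, List.mem_finRange, true_and, forall_exists_index]
  rintro _ j rfl
  exact ⟨h j, h j⟩

lemma appsIn_toMPLang {F : Set (ℝ → ℝ)} (hσ : L.σ ∈ F) {xs : Fin d → MPLang}
    (h : ∀ j, (xs j).AppsIn F) (i : Fin r) : (L.toMPLang xs i).AppsIn F := by
  refine ⟨hσ, appsIn_listSum ?_, trivial⟩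
  simp only [List.mem_map, List.mem_finRange, true_and, forall_exists_index]
  rintro _ j rfl
  exact ⟨h j, h j⟩

lemma evalTuple_toMPLang {d₀ : ℕ} (xs : Fin d → MPLang) (G : MPGraph)
    (χ : Fin G.n → Fin d₀ → ℝ) :
    evalTuple d₀ (L.toMPLang xs) G χ = L.eval G (evalTuple d₀ xs G χ) := by
  funext v i
  simp only [evalTuple, toMPLang, MPLang.eval, eval_listSum, List.map_map, Function.comp_def,
    ← Fin.sum_univ_def, Layer.eval, Matrix.mulVec, dotProduct, Finset.sum_apply,
    Finset.mul_sum, Finset.sum_add_distrib, mul_one]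

end Layer

namespace MPNN

open MPLang

def toMPLang : {d r : ℕ} → MPNN d r → (Fin d → MPLang) → Fin r → MPLang
  | _, _, .single L, xs => L.toMPLang xs
  | _, _, .cons L N, xs => N.toMPLang (L.toMPLang xs)

lemma appropriate_toMPLang {d₀ : ℕ} :
    ∀ {d r : ℕ} (T : MPNN d r) {xs : Fin d → MPLang}, (∀ j, (xs j).Appropriate d₀) →
      ∀ i, (T.toMPLang xs i).Appropriate d₀
  | _, _, .single L, _, h => L.appropriate_toMPLang h
  | _, _, .cons L N, _, h => N.appropriate_toMPLang (L.appropriate_toMPLang h)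

lemma appsIn_toMPLang {F : Set (ℝ → ℝ)} :
    ∀ {d r : ℕ} (T : MPNN d r), T.activations ⊆ F → ∀ {xs : Fin d → MPLang},
      (∀ j, (xs j).AppsIn F) → ∀ i, (T.toMPLang xs i).AppsIn F
  | _, _, .single L, hT, _, h => L.appsIn_toMPLang (hT rfl) h
  | _, _, .cons L N, hT, _, h =>
      N.appsIn_toMPLang ((Set.subset_insert _ _).trans hT)
        (L.appsIn_toMPLang (hT (Set.mem_insert _ _)) h)

lemma evalTuple_toMPLang {d₀ : ℕ} (G : MPGraph) (χ : Fin G.n → Fin d₀ → ℝ) :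
    ∀ {d r : ℕ} (T : MPNN d r) (xs : Fin d → MPLang),
      evalTuple d₀ (T.toMPLang xs) G χ = T.eval G (evalTuple d₀ xs G χ)
  | _, _, .single L, xs => L.evalTuple_toMPLang xs G χ
  | _, _, .cons L N, xs => by
      rw [toMPLang, evalTuple_toMPLang G χ N, L.evalTuple_toMPLang, eval]

end MPNN

/-- Proposition 1 of the paper: every MPNN has an equivalent
tuple of MPLang expressions, applying only activation functions used in the MPNN. -/
theorem mpnn_to_mplang (d r : ℕ) (T : MPNN d r) :
    ∃ es : Fin r → MPLang,
      (∀ j, (es j).Appropriate d) ∧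
      (∀ j, (es j).AppsIn T.activations) ∧
      ∀ (G : MPGraph) (χ : Fin G.n → Fin d → ℝ) (v : Fin G.n) (j : Fin r),
        (es j).eval d G χ v = T.eval G χ v j := by
  refine ⟨T.toMPLang (MPLang.projs d), T.appropriate_toMPLang (MPLang.appropriate_projs d),
    T.appsIn_toMPLang subset_rfl fun _ => trivial, fun G χ v j => ?_⟩
  have h := T.evalTuple_toMPLang G χ (MPLang.projs d)
  rw [MPLang.evalTuple_projs] at h
  exact congrFun (congrFun h v) j
end

section
/- Let 𝓕 be a set of continuous functions from ℝ to ℝ. Any addition-free MPLang expression e (one containing no subexpression of the form e₁ + e₂) in which every function application applies a function from 𝓕 has an equivalent 𝓖-MPNN with 𝓖 = 𝓕 ∪ {id}, i.e., an MPNN all of whose layers have activation function in 𝓕 ∪ {id} that defines the same GFMT as e. -/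
open scoped BigOperators

namespace MPLang

/-- An expression is addition-free if it contains no subexpression `e₁ + e₂`. -/
def AdditionFree : MPLang → Prop
  | .one => True
  | .proj _ => True
  | .scale _ e => e.AdditionFree
  | .add _ _ => False
  | .app _ _ e => e.AdditionFree
  | .diamond e => e.AdditionFree

end MPLang

/-!
Each constructor of an addition-free expression acts on a single scalar feature: `a · e` and
`f(e)` transform the value at the node itself and `◇e` sums it over the neighbours. Each is
therefore one MPNN layer of type `1 → 1` (activation `id` or `f`) stacked on top of an MPNN for
`e`, while the leaves `1` and `P_i` are single `id`-layers reading the input features.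
-/

namespace Layer

noncomputable def ofRow {m : ℕ} (w₁ w₂ : Fin m → ℝ) (b : ℝ) (σ : ℝ → ℝ)
    (hσ : Continuous σ) : Layer m 1 where
  W₁ := Matrix.of fun _ => w₁
  W₂ := Matrix.of fun _ => w₂
  b := fun _ => b
  σ := σ
  hσ := hσ

theorem eval_ofRow {m : ℕ} (w₁ w₂ : Fin m → ℝ) (b : ℝ) (σ : ℝ → ℝ) (hσ : Continuous σ)
    (G : MPGraph) (χ : Fin G.n → Fin m → ℝ) (v : Fin G.n) (i : Fin 1) :
    (ofRow w₁ w₂ b σ hσ).eval G χ v i =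
      σ (w₁ ⬝ᵥ χ v + w₂ ⬝ᵥ ∑ u ∈ G.neighbors v, χ u + b) :=
  rfl

noncomputable def scalar (a c b : ℝ) (σ : ℝ → ℝ) (hσ : Continuous σ) : Layer 1 1 :=
  ofRow (fun _ => a) (fun _ => c) b σ hσ

theorem eval_scalar (a c b : ℝ) (σ : ℝ → ℝ) (hσ : Continuous σ)
    (G : MPGraph) (χ : Fin G.n → Fin 1 → ℝ) (v : Fin G.n) (i : Fin 1) :
    (scalar a c b σ hσ).eval G χ v i =
      σ (a * χ v 0 + c * ∑ u ∈ G.neighbors v, χ u 0 + b) := by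
  simp [scalar, eval_ofRow, dotProduct, Finset.sum_apply]

end Layer

namespace MPNN

def snoc : {d m r : ℕ} → MPNN d m → Layer m r → MPNN d r
  | _, _, _, .single L₀, L => .cons L₀ (.single L)
  | _, _, _, .cons L₀ N, L => .cons L₀ (N.snoc L)

theorem eval_snoc {d m r : ℕ} (N : MPNN d m) (L : Layer m r) (G : MPGraph)
    (χ : Fin G.n → Fin d → ℝ) :
    (N.snoc L).eval G χ = L.eval G (N.eval G χ) := by
  induction N with
  | single L₀ => rfl
  | cons L₀ N ih => simp [snoc, eval, ih]

theorem activations_snoc {d m r : ℕ} (N : MPNN d m) (L : Layer m r) :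
    (N.snoc L).activations = insert L.σ N.activations := by
  induction N with
  | single L₀ => exact Set.pair_comm _ _
  | cons L₀ N ih =>
    simp only [snoc, activations, ih]
    exact Set.insert_comm _ _ _

end MPNN

def MPNNExpressible (A : Set (ℝ → ℝ)) (d : ℕ)
    (φ : (G : MPGraph) → (Fin G.n → Fin d → ℝ) → Fin G.n → ℝ) : Prop :=
  ∃ N : MPNN d 1, N.activations ⊆ A ∧ ∀ G χ v, N.eval G χ v 0 = φ G χ v

namespace MPNNExpressible

variable {A : Set (ℝ → ℝ)} {d : ℕ}

theorem const (hid : id ∈ A) : MPNNExpressible A d fun _ _ _ => 1 :=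
  ⟨.single (.ofRow 0 0 1 id continuous_id), Set.singleton_subset_iff.2 hid,
    fun G χ v => by simp [MPNN.eval, Layer.eval_ofRow]⟩

theorem coord (hid : id ∈ A) (j : Fin d) : MPNNExpressible A d fun _ χ v => χ v j :=
  ⟨.single (.ofRow (Pi.single j 1) 0 0 id continuous_id), Set.singleton_subset_iff.2 hid,
    fun G χ v => by simp [MPNN.eval, Layer.eval_ofRow, single_dotProduct]⟩

theorem scalarLayer {φ ψ : (G : MPGraph) → (Fin G.n → Fin d → ℝ) → Fin G.n → ℝ}
    (hφ : MPNNExpressible A d φ) {σ : ℝ → ℝ} (hσ : Continuous σ) (hσA : σ ∈ A) (a c b : ℝ)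
    (hψ : ∀ G χ v, ψ G χ v = σ (a * φ G χ v + c * ∑ u ∈ G.neighbors v, φ G χ u + b)) :
    MPNNExpressible A d ψ := by
  obtain ⟨N, hact, hN⟩ := hφ
  refine ⟨N.snoc (.scalar a c b σ hσ), ?_, fun G χ v => ?_⟩
  · rw [MPNN.activations_snoc]
    exact Set.insert_subset hσA hact
  · simp only [MPNN.eval_snoc, Layer.eval_scalar, hN, hψ]

end MPNNExpressible

theorem MPLang.eval_proj {d i : ℕ} (h : i - 1 < d) :
    (MPLang.proj i).eval d = fun _ χ v => χ v ⟨i - 1, h⟩ := by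
  funext G χ v
  simp [MPLang.eval, h]

theorem additionFree_mplang_to_mpnn_general (F : Set (ℝ → ℝ))
    (e : MPLang) (hadd : e.AdditionFree) (heF : e.AppsIn F)
    (d : ℕ) (hd : e.Appropriate d) :
    ∃ N : MPNN d 1, N.activations ⊆ insert id F ∧
      ∀ (G : MPGraph) (χ : Fin G.n → Fin d → ℝ) (v : Fin G.n),
        N.eval G χ v 0 = e.eval d G χ v := by
  show MPNNExpressible (insert id F) d (e.eval d)
  have hid : id ∈ insert id F := Set.mem_insert _ _
  induction e with
  | one => exact .const hid
  | proj i =>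
    have hi : i - 1 < d := by obtain ⟨_, _⟩ := hd; omega
    rw [MPLang.eval_proj hi]
    exact .coord hid _
  | scale a e ih =>
    exact (ih hadd heF hd).scalarLayer continuous_id hid a 0 0 fun _ _ _ => by
      simp [MPLang.eval]
  | add => exact hadd.elim
  | app f hf e ih =>
    exact (ih hadd heF.2 hd).scalarLayer hf (Set.mem_insert_of_mem _ heF.1) 1 0 0
      fun _ _ _ => by simp [MPLang.eval]
  | diamond e ih =>
    exact (ih hadd heF hd).scalarLayer continuous_id hid 0 1 0 fun _ _ _ => by
      simp [MPLang.eval]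

/-- Proposition 2 of the paper: any addition-free MPLang
expression using functions from `F` has an equivalent `(F ∪ {id})`-MPNN. -/
theorem additionFree_mplang_to_mpnn (F : Set (ℝ → ℝ)) (hF : ∀ f ∈ F, Continuous f)
    (e : MPLang) (hadd : e.AdditionFree) (heF : e.AppsIn F)
    (d : ℕ) (hd : e.Appropriate d) :
    ∃ N : MPNN d 1, N.activations ⊆ insert id F ∧
      ∀ (G : MPGraph) (χ : Fin G.n → Fin d → ℝ) (v : Fin G.n),
        N.eval G χ v 0 = e.eval d G χ v :=
  additionFree_mplang_to_mpnn_general F e hadd heF d hd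
end

section
/- ReLU-MPNNs are closed under concatenation: for any two ReLU-MPNNs L and K of types d → r₁ and d → r₂ respectively, there exists a ReLU-MPNN of type d → (r₁ + r₂) that expresses the concatenation L | K. -/
open scoped BigOperators

/-!
Two ReLU-MPNNs of the same depth whose last layers both have the identity activation run side
by side: stack their first layers, and make every later layer block-diagonal. Every ReLU-MPNN
has this shape after appending an identity layer if its last layer is a ReLU layer, and its depth
can be raised one layer at a time without changing what it computes: replace the final affine
layer `p` by a ReLU layer computing `(p⁺, p⁻)` followed by an affine layer computing `p⁺ - p⁻`.
-/

lemma continuous_ReLU : Continuous ReLU := continuous_const.max continuous_id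

lemma ReLU_sub_ReLU_neg (a : ℝ) : ReLU a - ReLU (-a) = a := by
  simpa only [ReLU, posPart_def, negPart_def, max_comm] using posPart_sub_negPart a

open Matrix in
lemma Matrix.append_mulVec {α : Type*} [NonUnitalNonAssocSemiring α] {m₁ m₂ n : ℕ}
    (A : Matrix (Fin m₁) (Fin n) α) (B : Matrix (Fin m₂) (Fin n) α) (x : Fin n → α) :
    (Fin.append A B : Matrix (Fin (m₁ + m₂)) (Fin n) α) *ᵥ x = Fin.append (A *ᵥ x) (B *ᵥ x) := by
  funext i
  refine Fin.addCases (fun i => ?_) (fun i => ?_) i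
  · simp only [mulVec, Fin.append_left A B i, Fin.append_left]
  · simp only [mulVec, Fin.append_right A B i, Fin.append_right]

namespace Layer

variable {d r : ℕ}

/-- The activation of `L₂` is discarded. -/
def stack {r₁ r₂ : ℕ} (L₁ : Layer d r₁) (L₂ : Layer d r₂) : Layer d (r₁ + r₂) :=
  ⟨Fin.append L₁.W₁ L₂.W₁, Fin.append L₁.W₂ L₂.W₂, Fin.append L₁.b L₂.b, L₁.σ, L₁.hσ⟩

lemma eval_stack {r₁ r₂ : ℕ} (L₁ : Layer d r₁) (L₂ : Layer d r₂) (hσ : L₂.σ = L₁.σ)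
    (G : MPGraph) (χ : Fin G.n → Fin d → ℝ) (v : Fin G.n) :
    (L₁.stack L₂).eval G χ v = Fin.append (L₁.eval G χ v) (L₂.eval G χ v) := by
  funext i
  refine Fin.addCases (fun i => ?_) (fun i => ?_) i <;>
    simp [Layer.eval, stack, Matrix.append_mulVec, hσ]

noncomputable def comp {e : ℕ} (L : Layer d r) (P : (Fin e → ℝ) →ₗ[ℝ] Fin d → ℝ) : Layer e r :=
  ⟨L.W₁ * LinearMap.toMatrix' P, L.W₂ * LinearMap.toMatrix' P, L.b, L.σ, L.hσ⟩

lemma eval_comp {e : ℕ} (L : Layer d r) (P : (Fin e → ℝ) →ₗ[ℝ] Fin d → ℝ)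
    (G : MPGraph) (χ : Fin G.n → Fin e → ℝ) (v : Fin G.n) :
    (L.comp P).eval G χ v = L.eval G (P ∘ χ) v := by
  funext i
  simp [Layer.eval, comp, ← Matrix.mulVec_mulVec, LinearMap.toMatrix'_mulVec, map_sum]

lemma eval_stack_comp {d₁ d₂ r₁ r₂ e : ℕ} (L₁ : Layer d₁ r₁) (L₂ : Layer d₂ r₂)
    (hσ : L₂.σ = L₁.σ) (P₁ : (Fin e → ℝ) →ₗ[ℝ] Fin d₁ → ℝ) (P₂ : (Fin e → ℝ) →ₗ[ℝ] Fin d₂ → ℝ)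
    (G : MPGraph) (χ : Fin G.n → Fin e → ℝ) :
    ((L₁.comp P₁).stack (L₂.comp P₂)).eval G χ =
      fun v => Fin.append (L₁.eval G (P₁ ∘ χ) v) (L₂.eval G (P₂ ∘ χ) v) := by
  funext v
  rw [eval_stack (L₁.comp P₁) (L₂.comp P₂) hσ, eval_comp, eval_comp]

noncomputable def posNeg (L : Layer d r) : Layer d (r + r) :=
  stack ⟨L.W₁, L.W₂, L.b, ReLU, continuous_ReLU⟩ ⟨-L.W₁, -L.W₂, -L.b, ReLU, continuous_ReLU⟩

noncomputable def decode (r : ℕ) : Layer (r + r) r :=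
  ⟨LinearMap.toMatrix' (LinearMap.funLeft ℝ ℝ (Fin.castAdd r) -
      LinearMap.funLeft ℝ ℝ (Fin.natAdd r)), 0, 0, id, continuous_id⟩

lemma eval_decode (G : MPGraph) (χ : Fin G.n → Fin (r + r) → ℝ) (v : Fin G.n) :
    (decode r).eval G χ v = fun i => χ v (Fin.castAdd r i) - χ v (Fin.natAdd r i) := by
  funext i
  simp only [Layer.eval, decode, LinearMap.toMatrix'_mulVec]
  simp

lemma eval_decode_posNeg (L : Layer d r) (hσ : L.σ = id) (G : MPGraph)
    (χ : Fin G.n → Fin d → ℝ) (v : Fin G.n) :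
    (decode r).eval G (L.posNeg.eval G χ) v = L.eval G χ v := by
  funext i
  simp only [eval_decode, posNeg]
  rw [eval_stack, Fin.append_left, Fin.append_right]
  · simp only [Layer.eval, hσ, Matrix.neg_mulVec, Pi.neg_apply, ← neg_add, id, ReLU_sub_ReLU_neg]
  · rfl

end Layer

namespace MPNN

def IsStrictReLU : {d r : ℕ} → MPNN d r → ℕ → Prop
  | _, _, .single L, 0 => L.σ = id
  | _, _, .cons L N, n + 1 => L.σ = ReLU ∧ N.IsStrictReLU n
  | _, _, _, _ => False

lemma IsStrictReLU.isReLU : ∀ {d r n : ℕ} {M : MPNN d r}, M.IsStrictReLU n → M.IsReLU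
  | _, _, 0, .single _, h => Or.inr h
  | _, _, _ + 1, .cons _ _, h => ⟨h.1, h.2.isReLU⟩

variable {d r : ℕ}

lemma IsReLU.exists_isStrictReLU {M : MPNN d r} (hM : M.IsReLU) :
    ∃ n, ∃ M' : MPNN d r, M'.IsStrictReLU n ∧ M'.eval = M.eval := by
  induction M with
  | single L =>
    rcases hM with hσ | hσ
    · refine ⟨1, .cons L (.single ⟨1, 0, 0, id, continuous_id⟩), ⟨hσ, rfl⟩, ?_⟩
      funext G χ v i
      simp [eval, Layer.eval]
    · exact ⟨0, .single L, hσ, rfl⟩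
  | cons L N ih =>
    obtain ⟨n, N', hN', hN'_eval⟩ := ih hM.2
    refine ⟨n + 1, .cons L N', ⟨hM.1, hN'⟩, ?_⟩
    funext G χ
    simp only [eval, hN'_eval]

lemma IsStrictReLU.exists_isStrictReLU_succ {n : ℕ} {M : MPNN d r} (hM : M.IsStrictReLU n) :
    ∃ M' : MPNN d r, M'.IsStrictReLU (n + 1) ∧ M'.eval = M.eval := by
  induction M generalizing n with
  | single L =>
    cases n with
    | zero =>
      refine ⟨.cons L.posNeg (.single (Layer.decode _)), ⟨rfl, rfl⟩, ?_⟩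
      funext G χ v
      exact L.eval_decode_posNeg hM G χ v
    | succ n => exact hM.elim
  | cons L N ih =>
    cases n with
    | zero => exact hM.elim
    | succ n =>
      obtain ⟨N', hN', hN'_eval⟩ := ih hM.2
      refine ⟨.cons L N', ⟨hM.1, hN'⟩, ?_⟩
      funext G χ
      simp only [eval, hN'_eval]

lemma IsStrictReLU.exists_isStrictReLU_of_le {n k : ℕ} {M : MPNN d r} (hM : M.IsStrictReLU n)
    (hnk : n ≤ k) :
    ∃ M' : MPNN d r, M'.IsStrictReLU k ∧ M'.eval = M.eval := by
  induction k, hnk using Nat.le_induction with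
  | base => exact ⟨M, hM, rfl⟩
  | succ k _ ih =>
    obtain ⟨M', hM', hM'_eval⟩ := ih
    obtain ⟨M'', hM'', hM''_eval⟩ := hM'.exists_isStrictReLU_succ
    exact ⟨M'', hM'', hM''_eval.trans hM'_eval⟩

/-- The inputs are read through linear maps so that the induction applies to the tails, which
read the two halves of the stacked features. -/
lemma IsStrictReLU.exists_concat {n d₁ d₂ r₁ r₂ e : ℕ} {M₁ : MPNN d₁ r₁} {M₂ : MPNN d₂ r₂}
    (h₁ : M₁.IsStrictReLU n) (h₂ : M₂.IsStrictReLU n)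
    (P₁ : (Fin e → ℝ) →ₗ[ℝ] Fin d₁ → ℝ) (P₂ : (Fin e → ℝ) →ₗ[ℝ] Fin d₂ → ℝ) :
    ∃ N : MPNN e (r₁ + r₂), N.IsStrictReLU n ∧ ∀ G χ v,
      N.eval G χ v = Fin.append (M₁.eval G (P₁ ∘ χ) v) (M₂.eval G (P₂ ∘ χ) v) := by
  induction M₁ generalizing n d₂ r₂ M₂ e with
  | single L₁ =>
    cases n with
    | succ n => exact h₁.elim
    | zero =>
      cases M₂ with
      | cons => exact h₂.elim
      | single L₂ =>
        refine ⟨.single ((L₁.comp P₁).stack (L₂.comp P₂)), h₁, fun G χ v => ?_⟩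
        rw [eval, Layer.eval_stack_comp _ _ (h₂.trans h₁.symm)]
        rfl
  | cons L₁ N₁ ih =>
    cases n with
    | zero => exact h₁.elim
    | succ n =>
      cases M₂ with
      | single => exact h₂.elim
      | cons L₂ N₂ =>
        obtain ⟨N, hN, hN_eval⟩ := ih h₁.2 h₂.2 (LinearMap.funLeft ℝ ℝ (Fin.castAdd _))
          (LinearMap.funLeft ℝ ℝ (Fin.natAdd _))
        refine ⟨.cons ((L₁.comp P₁).stack (L₂.comp P₂)) N, ⟨h₁.1, hN⟩, fun G χ v => ?_⟩
        rw [eval, hN_eval, Layer.eval_stack_comp _ _ (h₂.1.trans h₁.1.symm)]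
        congr <;> funext u i <;> simp [LinearMap.funLeft_apply]

end MPNN

/-- Lemma 2 of the paper: ReLU-MPNNs are closed under
concatenation. -/
theorem relu_mpnn_concat (d r₁ r₂ : ℕ) (L : MPNN d r₁) (K : MPNN d r₂)
    (hL : L.IsReLU) (hK : K.IsReLU) :
    ∃ N : MPNN d (r₁ + r₂), N.IsReLU ∧
      ∀ (G : MPGraph) (χ : Fin G.n → Fin d → ℝ) (v : Fin G.n),
        N.eval G χ v = Fin.append (L.eval G χ v) (K.eval G χ v) := by
  obtain ⟨n₁, L₁, hL₁, hL₁_eval⟩ := hL.exists_isStrictReLU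
  obtain ⟨n₂, K₁, hK₁, hK₁_eval⟩ := hK.exists_isStrictReLU
  obtain ⟨L₂, hL₂, hL₂_eval⟩ := hL₁.exists_isStrictReLU_of_le (le_max_left n₁ n₂)
  obtain ⟨K₂, hK₂, hK₂_eval⟩ := hK₁.exists_isStrictReLU_of_le (le_max_right n₁ n₂)
  obtain ⟨N, hN, hN_eval⟩ := hL₂.exists_concat hK₂ LinearMap.id LinearMap.id
  refine ⟨N, hN.isReLU, fun G χ v => ?_⟩
  rw [hN_eval, hL₂_eval, hK₂_eval, hL₁_eval, hK₁_eval]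
  rfl
end

section
/- Let L and K be MPNN layers of types d_L → r_L and d_K → r_K respectively, let X_L ⊆ ℝ^{d_L} and X_K ⊆ ℝ^{d_K} be bounded, and let p be a natural number. Then there exist MPNN layers L' and K' such that: (1) L' and K' have the same activation function; (2) L' is equivalent to L over 𝔾_p and X_L; and (3) K' is equivalent to K over 𝔾_p and X_K. -/
open scoped BigOperators

/-!
On bounded inputs and graphs of bounded degree the pre-activations of a layer stay in a bounded
interval `[-M, M]`, so only the values of its activation on that interval matter. Adding a large
constant to the bias of `L` and subtracting one from the bias of `K` moves these intervals apart,
and a single continuous function can then agree with the shifted activation of `L` on the right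
half-line and with that of `K` on the left one.
-/

open Matrix

theorem exists_continuous_comp_add_eq (f g : ℝ → ℝ) (hf : Continuous f) (hg : Continuous g)
    (M : ℝ) :
    ∃ h : ℝ → ℝ, Continuous h ∧ ∃ a b : ℝ,
      (∀ x, -M ≤ x → h (x + a) = f x) ∧ (∀ x, x ≤ M → h (x + b) = g x) := by
  -- `t` is `0` on `(-∞, -1]` and `1` on `[1, ∞)`.
  let t : ℝ → ℝ := fun y => max 0 (min 1 ((y + 1) / 2))
  refine ⟨fun y => t y * f (max y 1 - (M + 1)) + (1 - t y) * g (min y (-1) + (M + 1)),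
    by fun_prop, M + 1, -(M + 1), fun x hx => ?_, fun x hx => ?_⟩
  · have ht : t (x + (M + 1)) = 1 := by simp only [t]; grind
    simp only [ht, max_eq_left (show 1 ≤ x + (M + 1) by linarith)]
    ring_nf
  · have ht : t (x + -(M + 1)) = 0 := by simp only [t]; grind
    simp only [ht, min_eq_left (show x + -(M + 1) ≤ -1 by linarith)]
    ring_nf

namespace Layer

variable {d r : ℕ}

noncomputable def preact (L : Layer d r) (G : MPGraph) (χ : Fin G.n → Fin d → ℝ)
    (v : Fin G.n) : Fin r → ℝ :=
  L.W₁ *ᵥ χ v + L.W₂ *ᵥ (∑ u ∈ G.neighbors v, χ u) + L.b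

theorem eval_apply (L : Layer d r) (G : MPGraph) (χ : Fin G.n → Fin d → ℝ) (v : Fin G.n)
    (i : Fin r) : L.eval G χ v i = L.σ (L.preact G χ v i) :=
  rfl

theorem exists_norm_preact_le (L : Layer d r) (p : ℕ) {X : Set (Fin d → ℝ)}
    (hX : Bornology.IsBounded X) :
    ∃ M : ℝ, ∀ G : MPGraph, G.DegreeLE p → ∀ χ : Fin G.n → Fin d → ℝ, (∀ v, χ v ∈ X) →
      ∀ v, ‖L.preact G χ v‖ ≤ M := by
  obtain ⟨C, hC_pos, hC⟩ := hX.exists_pos_norm_le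
  obtain ⟨M, hM⟩ :=
    ((isCompact_closedBall (0 : Fin d → ℝ) C).prod (isCompact_closedBall 0 (p * C))
      ).exists_bound_of_continuousOn
      (f := fun z => L.W₁ *ᵥ z.1 + L.W₂ *ᵥ z.2 + L.b) (by fun_prop)
  refine ⟨M, fun G hG χ hχ v => hM (χ v, ∑ u ∈ G.neighbors v, χ u) ⟨?_, ?_⟩⟩
  · exact mem_closedBall_zero_iff.2 (hC _ (hχ v))
  · rw [mem_closedBall_zero_iff]
    calc ‖∑ u ∈ G.neighbors v, χ u‖ ≤ ∑ _u ∈ G.neighbors v, C :=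
          norm_sum_le_of_le _ fun u _ => hC _ (hχ u)
      _ = G.degree v * C := by simp [MPGraph.degree]
      _ ≤ p * C := by gcongr; exact_mod_cast hG v

def shift (L : Layer d r) (τ : ℝ → ℝ) (hτ : Continuous τ) (c : ℝ) : Layer d r where
  W₁ := L.W₁
  W₂ := L.W₂
  b := L.b + fun _ => c
  σ := τ
  hσ := hτ

theorem eval_shift_eq (L : Layer d r) (τ : ℝ → ℝ) (hτ : Continuous τ) (c : ℝ) (G : MPGraph)
    (χ : Fin G.n → Fin d → ℝ) (v : Fin G.n)
    (h : ∀ i, τ (L.preact G χ v i + c) = L.σ (L.preact G χ v i)) :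
    (L.shift τ hτ c).eval G χ v = L.eval G χ v := by
  funext i
  rw [eval_apply, eval_apply, ← h]
  simp only [preact, shift, Pi.add_apply, add_assoc]

end Layer

/-- Lemma 4 of the paper: for layers `L`, `K`, bounded sets
`X_L`, `X_K`, and degree bound `p`, there are layers `L'`, `K'` with the same
activation function such that `L'` is equivalent to `L` over `𝔾_p` and `X_L`
and `K'` is equivalent to `K` over `𝔾_p` and `X_K`. -/
theorem layers_same_activation (dL rL dK rK p : ℕ)
    (L : Layer dL rL) (K : Layer dK rK)
    (XL : Set (Fin dL → ℝ)) (XK : Set (Fin dK → ℝ))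
    (hXL : Bornology.IsBounded XL) (hXK : Bornology.IsBounded XK) :
    ∃ (L' : Layer dL rL) (K' : Layer dK rK),
      L'.σ = K'.σ ∧
      (∀ (G : MPGraph), G.DegreeLE p →
        ∀ χ : Fin G.n → Fin dL → ℝ, (∀ v, χ v ∈ XL) →
          ∀ v, L'.eval G χ v = L.eval G χ v) ∧
      (∀ (G : MPGraph), G.DegreeLE p →
        ∀ χ : Fin G.n → Fin dK → ℝ, (∀ v, χ v ∈ XK) →
          ∀ v, K'.eval G χ v = K.eval G χ v) := by
  obtain ⟨ML, hML⟩ := L.exists_norm_preact_le p hXL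
  obtain ⟨MK, hMK⟩ := K.exists_norm_preact_le p hXK
  obtain ⟨τ, hτ, a, b, hτL, hτK⟩ :=
    exists_continuous_comp_add_eq L.σ K.σ L.hσ K.hσ (max ML MK)
  refine ⟨L.shift τ hτ a, K.shift τ hτ b, rfl, ?_, ?_⟩
  · intro G hG χ hχ v
    refine L.eval_shift_eq τ hτ a G χ v fun i => hτL _ ?_
    have hi := (norm_le_pi_norm (L.preact G χ v) i).trans (hML G hG χ hχ v)
    exact neg_le_of_abs_le (hi.trans (le_max_left _ _))
  · intro G hG χ hχ v
    refine K.eval_shift_eq τ hτ b G χ v fun i => hτK _ ?_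
    have hi := (norm_le_pi_norm (K.preact G χ v) i).trans (hMK G hG χ hχ v)
    exact le_of_abs_le (hi.trans (le_max_right _ _))
end

section
/- Let p and d be natural numbers, let X ⊆ ℝ^d be compact, and let e be an MPLang expression appropriate for input arity d. Then the image of e over 𝔾_p and X, namely the set { e(G)(χ)(v) : G ∈ 𝔾_p, χ a d-dimensional feature map on G with image contained in X, v ∈ V(G) } ⊆ ℝ, is contained in a compact subset of ℝ. -/
open scoped BigOperators

/-! Induction on the expression. Every constructor except `◇` acts pointwise by a continuous
map, which keeps the values inside a compact set; a `◇`-node sums at most `p` values from a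
compact, hence bounded, set `Y ⊆ closedBall 0 M`, so it stays in `closedBall 0 (p * M)`. -/

namespace MPLang

def HasCompactHull (p d : ℕ) (X : Set (Fin d → ℝ)) (e : MPLang) : Prop :=
  ∃ Y : Set ℝ, IsCompact Y ∧
    ∀ (G : MPGraph), G.DegreeLE p →
      ∀ χ : Fin G.n → Fin d → ℝ, (∀ v, χ v ∈ X) → ∀ v : Fin G.n, e.eval d G χ v ∈ Y

section

open scoped Pointwise

variable {p d : ℕ} {X : Set (Fin d → ℝ)} {e e₁ e₂ : MPLang}

theorem hasCompactHull_one : HasCompactHull p d X .one :=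
  ⟨{1}, isCompact_singleton, fun _ _ _ _ _ => rfl⟩

theorem hasCompactHull_proj (hX : IsCompact X) (i : ℕ) : HasCompactHull p d X (.proj i) := by
  let P : (Fin d → ℝ) → ℝ := fun x => if h : i - 1 < d then x ⟨i - 1, h⟩ else 0
  have hP : Continuous P := by
    unfold P; split_ifs <;> fun_prop
  exact ⟨P '' X, hX.image hP, fun _ _ χ hχ v => ⟨χ v, hχ v, rfl⟩⟩

theorem HasCompactHull.scale (a : ℝ) (h : HasCompactHull p d X e) :
    HasCompactHull p d X (.scale a e) := by
  obtain ⟨Y, hY, hmem⟩ := h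
  exact ⟨(a * ·) '' Y, hY.image (by fun_prop), fun G hG χ hχ v => ⟨_, hmem G hG χ hχ v, rfl⟩⟩

theorem HasCompactHull.add (h₁ : HasCompactHull p d X e₁) (h₂ : HasCompactHull p d X e₂) :
    HasCompactHull p d X (.add e₁ e₂) := by
  obtain ⟨Y₁, hY₁, hmem₁⟩ := h₁
  obtain ⟨Y₂, hY₂, hmem₂⟩ := h₂
  exact ⟨Y₁ + Y₂, hY₁.add hY₂, fun G hG χ hχ v =>
    Set.add_mem_add (hmem₁ G hG χ hχ v) (hmem₂ G hG χ hχ v)⟩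

theorem HasCompactHull.app {f : ℝ → ℝ} (hf : Continuous f) (h : HasCompactHull p d X e) :
    HasCompactHull p d X (.app f hf e) := by
  obtain ⟨Y, hY, hmem⟩ := h
  exact ⟨f '' Y, hY.image hf, fun G hG χ hχ v => ⟨_, hmem G hG χ hχ v, rfl⟩⟩

theorem HasCompactHull.diamond (h : HasCompactHull p d X e) :
    HasCompactHull p d X e.diamond := by
  obtain ⟨Y, hY, hmem⟩ := h
  obtain ⟨M, hM, hYM⟩ := hY.isBounded.subset_closedBall_lt 0 0
  refine ⟨Metric.closedBall 0 (p * M), isCompact_closedBall _ _, fun G hG χ hχ v => ?_⟩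
  rw [mem_closedBall_zero_iff]
  calc ‖∑ u ∈ G.neighbors v, e.eval d G χ u‖
      ≤ ∑ _u ∈ G.neighbors v, M :=
        norm_sum_le_of_le _ fun u _ => mem_closedBall_zero_iff.1 (hYM (hmem G hG χ hχ u))
    _ = G.degree v * M := by simp [MPGraph.degree]
    _ ≤ p * M := by gcongr; exact hG v

end

end MPLang

theorem mplang_image_compact_general (p d : ℕ) (X : Set (Fin d → ℝ)) (hX : IsCompact X)
    (e : MPLang) :
    ∃ Y : Set ℝ, IsCompact Y ∧
      ∀ (G : MPGraph), G.DegreeLE p →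
        ∀ χ : Fin G.n → Fin d → ℝ, (∀ v, χ v ∈ X) →
          ∀ v : Fin G.n, e.eval d G χ v ∈ Y := by
  show e.HasCompactHull p d X
  induction e with
  | one => exact MPLang.hasCompactHull_one
  | proj i => exact MPLang.hasCompactHull_proj hX i
  | scale a e ih => exact ih.scale a
  | add e₁ e₂ ih₁ ih₂ => exact ih₁.add ih₂
  | app f hf e ih => exact ih.app hf
  | diamond e ih => exact ih.diamond

/-- Lemma 6 of the paper: for a degree bound `p` and a compact
set `X ⊆ ℝ^d`, the image of an MPLang expression appropriate for `d` over `𝔾_p`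
and `X` is contained in a compact subset of `ℝ`. -/
theorem mplang_image_compact (p d : ℕ) (X : Set (Fin d → ℝ)) (hX : IsCompact X)
    (e : MPLang) (he : e.Appropriate d) :
    ∃ Y : Set ℝ, IsCompact Y ∧
      ∀ (G : MPGraph), G.DegreeLE p →
        ∀ χ : Fin G.n → Fin d → ℝ, (∀ v, χ v ∈ X) →
          ∀ v : Fin G.n, e.eval d G χ v ∈ Y :=
  mplang_image_compact_general p d X hX e
end
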